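/- Let I be a strongly stable monomial ideal generated in degree d, with minimal generators f_1 ≺ ... ≺ f_ν in co-lexicographic order, and let a be a vector making I a-determined. Write I' = (f_1,...,f_{ν-1}). Then the colon ideal \hat{I'}^{[a]} : (x^a/f_ν) equals the ideal generated by the variables x_j with j in supp(f_ν) \ {1}, i.e., the variables other than x_1 dividing f_ν. -/

import Mathlib

/-!
For a generator `x^a/g` of the dual of `I'` (so `g ≺ f`, `deg g = deg f`), the co-lex witness `k`
cannot be the first variable, since otherwise `g ≤ f`; from `g_k < f_k` every monomial `m` with
`x^a/g ∣ m·x^a/f` is divisible by `x_k`. Conversely, for `j ∈ supp_1(f)` strong stability puts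
`g = f·x_1/x_j` in `I`, hence among its degree-`d` generators, and `x^a/g ∣ x_j·x^a/f`.
-/

open MvPolynomial Finsupp

/-- The monomial ideal generated by the monomials with exponent vectors in `S`. -/
noncomputable def monomialIdeal (K : Type*) [Field K] {n : ℕ} (S : Finset (Fin n →₀ ℕ)) :
    Ideal (MvPolynomial (Fin n) K) :=
  Ideal.span ((fun s => (monomial s (1 : K))) '' S)

/-- Exponent vectors of the generators `x^a / f` of the `a`-dual. -/
noncomputable def dualGens {n : ℕ} (a : Fin n →₀ ℕ) (S : Finset (Fin n →₀ ℕ)) :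
    Finset (Fin n →₀ ℕ) :=
  S.image (fun s => a - s)

/-- Strong stability: for every monomial `m ∈ I`, every `x_i | m` and `j < i`,
`m·x_j/x_i ∈ I`. -/
def IsStronglyStable {K : Type*} [Field K] {n : ℕ}
    (I : Ideal (MvPolynomial (Fin n) K)) : Prop :=
  ∀ (s : Fin n →₀ ℕ) (i j : Fin n), monomial s (1 : K) ∈ I →
    s i ≠ 0 → j < i →
    monomial (s + single j 1 - single i 1) (1 : K) ∈ I

/-- Strict co-lexicographic order. -/
def ColexLT {n : ℕ} (s t : Fin n →₀ ℕ) : Prop :=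
  ∃ k : Fin n, s k < t k ∧ ∀ l, k < l → s l = t l

namespace Finsupp

variable {σ : Type*}

theorem eq_of_le_of_degree_eq {s t : σ →₀ ℕ} (hle : s ≤ t) (hdeg : s.degree = t.degree) :
    s = t := by
  have hzero : (t - s).degree = 0 := by
    have := congrArg degree (add_tsub_cancel_of_le hle)
    rw [map_add, hdeg] at this
    omega
  exact le_antisymm hle (tsub_eq_zero_iff_le.mp ((degree_eq_zero_iff _).mp hzero))

theorem tsub_single_add_single {f : σ →₀ ℕ} {i : σ} (hi : f i ≠ 0) (j : σ) :
    f + single j 1 - single i 1 + single i 1 = f + single j 1 :=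
  tsub_add_cancel_of_le (single_le_iff.mpr (by rw [add_apply]; omega))

end Finsupp

theorem tsub_le_add_tsub_of_le_add {α : Type*} [AddCommMonoid α] [PartialOrder α]
    [IsOrderedAddMonoid α] [CanonicallyOrderedAdd α] [Sub α] [OrderedSub α] {a e f g : α}
    (h : f ≤ g + e) : a - g ≤ e + (a - f) :=
  calc a - g ≤ a - (f - e) := tsub_le_tsub_left (tsub_le_iff_right.mpr h) a
    _ ≤ a - f + e := tsub_tsub_le_tsub_add
    _ = e + (a - f) := add_comm _ _

theorem ColexLT.exists_ne_zero_lt_of_degree_eq {n : ℕ} {s t : Fin n →₀ ℕ} (h : ColexLT s t)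
    (hdeg : s.degree = t.degree) : ∃ k : Fin n, (k : ℕ) ≠ 0 ∧ s k < t k := by
  obtain ⟨k, hk, habove⟩ := h
  refine ⟨k, fun hk0 => ?_, hk⟩
  have hle : s ≤ t := fun l => by
    rcases eq_or_lt_of_le (Fin.le_iff_val_le_val.mpr (hk0 ▸ Nat.zero_le l)) with rfl | hkl
    · exact hk.le
    · exact (habove l hkl).le
  exact hk.ne (DFunLike.congr_fun (Finsupp.eq_of_le_of_degree_eq hle hdeg) k)

section MonomialIdeal

variable {K : Type*} [Field K] {n : ℕ}

theorem monomial_mem_monomialIdeal_iff {S : Finset (Fin n →₀ ℕ)} {u : Fin n →₀ ℕ} :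
    monomial u (1 : K) ∈ monomialIdeal K S ↔ ∃ s ∈ S, s ≤ u := by
  simp [monomialIdeal, mem_ideal_span_monomial_image]

theorem mem_colon_monomialIdeal_iff {S : Finset (Fin n →₀ ℕ)} {u : Fin n →₀ ℕ}
    {p : MvPolynomial (Fin n) K} :
    p ∈ (monomialIdeal K S).colon (Ideal.span {monomial u (1 : K)}) ↔
      ∀ m ∈ p.support, ∃ s ∈ S, s ≤ m + u := by
  rw [Ideal.mem_colon_span_singleton, monomialIdeal, mem_ideal_span_monomial_image]
  constructor
  · intro h m hm
    exact_mod_cast h (m + u) (by simpa using hm)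
  · intro h m hm
    rw [MvPolynomial.mem_support_iff, coeff_mul_monomial'] at hm
    split_ifs at hm with hum
    · obtain ⟨s, hs, hsle⟩ := h (m - u) (MvPolynomial.mem_support_iff.mpr (by simpa using hm))
      exact ⟨s, hs, tsub_add_cancel_of_le hum ▸ hsle⟩
    · exact absurd rfl hm

theorem mem_of_monomial_mem_monomialIdeal {S : Finset (Fin n →₀ ℕ)} {d : ℕ}
    (hdeg : ∀ s ∈ S, s.degree = d) {g : Fin n →₀ ℕ}
    (hg : monomial g (1 : K) ∈ monomialIdeal K S) (hgd : g.degree = d) : g ∈ S := by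
  obtain ⟨s, hs, hsg⟩ := monomial_mem_monomialIdeal_iff.mp hg
  exact Finsupp.eq_of_le_of_degree_eq hsg (by rw [hdeg s hs, hgd]) ▸ hs

theorem IsStronglyStable.shift_mem {S : Finset (Fin n →₀ ℕ)} {d : ℕ}
    (hstable : IsStronglyStable (monomialIdeal K S)) (hdeg : ∀ s ∈ S, s.degree = d)
    {f : Fin n →₀ ℕ} (hf : f ∈ S) {i j : Fin n} (hi : f i ≠ 0) (hji : j < i) :
    f + single j 1 - single i 1 ∈ S := by
  have hfI : monomial f (1 : K) ∈ monomialIdeal K S :=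
    monomial_mem_monomialIdeal_iff.mpr ⟨f, hf, le_rfl⟩
  refine mem_of_monomial_mem_monomialIdeal hdeg (hstable f i j hfI hi hji) ?_
  have := congrArg Finsupp.degree (Finsupp.tsub_single_add_single hi j)
  simp only [map_add, Finsupp.degree_single, hdeg f hf] at this
  omega

theorem IsStronglyStable.exists_mem_erase_le_add_single {S : Finset (Fin n →₀ ℕ)} {d : ℕ}
    (hstable : IsStronglyStable (monomialIdeal K S)) (hdeg : ∀ s ∈ S, s.degree = d)
    {f : Fin n →₀ ℕ} (hf : f ∈ S) {j : Fin n} (hj : f j ≠ 0) (hj0 : (j : ℕ) ≠ 0) :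
    ∃ g ∈ S.erase f, f ≤ g + single j 1 := by
  set g := f + single ⟨0, j.pos⟩ 1 - single j 1
  have hgS : g ∈ S := hstable.shift_mem hdeg hf hj (Fin.lt_def.mpr (Nat.pos_of_ne_zero hj0))
  have hgj : g + single j 1 = f + single ⟨0, j.pos⟩ 1 := Finsupp.tsub_single_add_single hj _
  have hgf : g ≠ f := fun h => hj0 (congrArg Fin.val
    (Finsupp.single_left_injective one_ne_zero (add_left_cancel (h ▸ hgj))))
  exact ⟨g, Finset.mem_erase.mpr ⟨hgf, hgS⟩, hgj ▸ le_self_add⟩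

end MonomialIdeal

/-- Variables are indexed by `Fin n`, so `x_1` is `X 0`. -/
theorem colon_dual_eq_span_vars_general (K : Type*) [Field K] {n d : ℕ}
    (a : Fin n →₀ ℕ) (S : Finset (Fin n →₀ ℕ))
    (hstable : IsStronglyStable (monomialIdeal K S))
    (hdeg : ∀ s ∈ S, (s.sum fun _ e => e) = d)
    (hdet : ∀ s ∈ S, s ≤ a)
    (f : Fin n →₀ ℕ) (hf : f ∈ S) (hmax : ∀ g ∈ S, g ≠ f → ColexLT g f) :
    Submodule.colon (monomialIdeal K (dualGens a (S.erase f)))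
        (Ideal.span {monomial (a - f) (1 : K)}) =
      Ideal.span ((fun j => (X j : MvPolynomial (Fin n) K)) ''
        {j | j ∈ f.support ∧ (j : ℕ) ≠ 0}) := by
  have hdeg' : ∀ s ∈ S, s.degree = d := hdeg
  apply le_antisymm
  · intro p hp
    rw [mem_ideal_span_X_image]
    intro m hm
    obtain ⟨_, hu, hule⟩ := mem_colon_monomialIdeal_iff.mp hp m hm
    obtain ⟨s, hs, rfl⟩ := Finset.mem_image.mp hu
    obtain ⟨hsf, hsS⟩ := Finset.mem_erase.mp hs
    obtain ⟨k, hk0, hk⟩ :=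
      (hmax s hsS hsf).exists_ne_zero_lt_of_degree_eq (by rw [hdeg' s hsS, hdeg' f hf])
    have hak := hule k
    have hfk := hdet f hf k
    simp only [Finsupp.add_apply, Finsupp.tsub_apply] at hak
    exact ⟨k, ⟨Finsupp.mem_support_iff.mpr (by omega), hk0⟩, by omega⟩
  · rw [Ideal.span_le]
    rintro _ ⟨j, ⟨hjf, hj0⟩, rfl⟩
    obtain ⟨g, hg, hfle⟩ :=
      hstable.exists_mem_erase_le_add_single hdeg' hf (Finsupp.mem_support_iff.mp hjf) hj0
    rw [SetLike.mem_coe, mem_colon_monomialIdeal_iff, support_X]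
    intro m hm
    rw [Finset.mem_singleton.mp hm]
    exact ⟨a - g, Finset.mem_image_of_mem _ hg, tsub_le_add_tsub_of_le_add hfle⟩

/-- For an `a`-determined strongly stable ideal generated in degree `d` with minimal
generators `f_1 ≺ ⋯ ≺ f_ν` (co-lex), `ν ≥ 2`, writing `I' = (f_1,…,f_{ν-1})`, the colon
ideal `\hat{I'}^{[a]} : (x^a/f_ν)` is generated by the variables `x_j`, `j ∈ supp(f_ν) \ {1}`.
(Variables are indexed by `Fin n`, with `x_1` corresponding to the index `0`.) -/
theorem colon_dual_eq_span_vars (K : Type*) [Field K] {n d : ℕ}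
    (a : Fin n →₀ ℕ) (S : Finset (Fin n →₀ ℕ))
    (hstable : IsStronglyStable (monomialIdeal K S))
    (hdeg : ∀ s ∈ S, (s.sum fun _ e => e) = d)
    (hdet : ∀ s ∈ S, s ≤ a)
    (hcard : 2 ≤ S.card)
    (f : Fin n →₀ ℕ) (hf : f ∈ S) (hmax : ∀ g ∈ S, g ≠ f → ColexLT g f) :
    Submodule.colon (monomialIdeal K (dualGens a (S.erase f)))
        (Ideal.span {monomial (a - f) (1 : K)}) =
      Ideal.span ((fun j => (X j : MvPolynomial (Fin n) K)) ''
        {j | j ∈ f.support ∧ (j : ℕ) ≠ 0}) :=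
  colon_dual_eq_span_vars_general K a S hstable hdeg hdet f hf hmax
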